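/- arXiv:1002.1324 — 3 statements merged into one kernel-verified Lean document; each statement's English description precedes it below -/
import Mathlib

section
/- Let k be a field, A a finite-dimensional k-algebra, P a finitely generated projective left A-module, and P' a further finitely generated projective left A-module; set X := P ⊕ P'. Then the canonical ring homomorphism from (End_A(P))^op to the endomorphism ring of Hom_A(P, X) as a left module over End_A(X), given by precomposition (b acting by f ↦ f ∘ b), is bijective. (Here End_A(X) acts on Hom_A(P, X) by postcomposition.) In other words, B := (End_A(P))^op satisfies the double centralizer property B ≅ End_{End_A(X)}(Hom_A(P, X)). -/
/-!
If `r ∘ i = id` exhibits `P` as a direct summand of `X`, every `f : P → X` factors as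
`f = (f ∘ r) ∘ i` with `f ∘ r ∈ End_A X`. Hence an `End_A X`-linear endomorphism `Φ` of
`Hom_A(P, X)` is determined by `Φ i`, and is precomposition with `r ∘ Φ i`; precomposition is
injective because `i` is.
-/

namespace LinearMap

variable {A P X : Type*} [Semiring A] [AddCommMonoid P] [Module A P]
  [AddCommMonoid X] [Module A X]

def precompOp (b : (Module.End A P)ᵐᵒᵖ) : Module.End (Module.End A X) (P →ₗ[A] X) where
  toFun f := f ∘ₗ b.unop
  map_add' _ _ := add_comp _ _ _
  map_smul' _ _ := rfl

variable {i : P →ₗ[A] X} {r : X →ₗ[A] P}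

theorem eq_comp_smul_of_comp_eq_id (hri : r ∘ₗ i = id) (f : P →ₗ[A] X) :
    f = (f ∘ₗ r : Module.End A X) • i := by
  change f = f ∘ₗ r ∘ₗ i
  rw [hri, comp_id]

theorem eq_precompOp_of_comp_eq_id (hri : r ∘ₗ i = id)
    (Φ : Module.End (Module.End A X) (P →ₗ[A] X)) :
    Φ = precompOp (.op (r ∘ₗ Φ i)) := by
  ext f : 1
  conv_lhs => rw [eq_comp_smul_of_comp_eq_id hri f, map_smul]
  rfl

theorem precompOp_bijective_of_comp_eq_id (hri : r ∘ₗ i = id) :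
    Function.Bijective (precompOp : (Module.End A P)ᵐᵒᵖ → Module.End (Module.End A X) _) := by
  have hi : Function.Injective i := Function.LeftInverse.injective fun x => congr($hri x)
  refine ⟨fun b₁ b₂ h => ?_, fun Φ => ⟨_, (eq_precompOp_of_comp_eq_id hri Φ).symm⟩⟩
  exact MulOpposite.unop_injective <| (cancel_left hi).mp congr($h i)

end LinearMap

theorem double_centralizer_for_direct_summand_general
    (A : Type) [Ring A]
    (P P' : Type)
    [AddCommGroup P] [Module A P]
    [AddCommGroup P'] [Module A P'] :
    Function.Bijective (fun b : (Module.End A P)ᵐᵒᵖ =>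
      ({ toFun := fun f : P →ₗ[A] (P × P') => f ∘ₗ b.unop
         map_add' := fun f g => LinearMap.add_comp _ _ _
         map_smul' := fun c f => rfl } :
        Module.End (Module.End A (P × P')) (P →ₗ[A] (P × P')))) :=
  LinearMap.precompOp_bijective_of_comp_eq_id (LinearMap.fst_comp_inl A P P')

/-- Let `k` be a field, `A` a finite-dimensional `k`-algebra, `P`, `P'`
finitely generated projective left `A`-modules and `X := P ⊕ P'`.  Then the canonical
ring homomorphism `(End_A P)ᵒᵖ → End_{End_A X}(Hom_A(P, X))`, sending `b` to the map
`f ↦ f ∘ b` (precomposition), is bijective; here `End_A X` acts on `Hom_A(P, X)` by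
postcomposition.  This is the double centralizer property
`B = (End_A P)ᵒᵖ ≅ End_{End_A X}(Hom_A(P, X))`. -/
theorem double_centralizer_for_direct_summand
    (k : Type) [Field k] (A : Type) [Ring A] [Algebra k A] [FiniteDimensional k A]
    (P P' : Type)
    [AddCommGroup P] [Module A P] [Module.Finite A P] [Module.Projective A P]
    [AddCommGroup P'] [Module A P'] [Module.Finite A P'] [Module.Projective A P'] :
    Function.Bijective (fun b : (Module.End A P)ᵐᵒᵖ =>
      ({ toFun := fun f : P →ₗ[A] (P × P') => f ∘ₗ b.unop
         map_add' := fun f g => LinearMap.add_comp _ _ _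
         map_smul' := fun c f => rfl } :
        Module.End (Module.End A (P × P')) (P →ₗ[A] (P × P')))) :=
  double_centralizer_for_direct_summand_general A P P'
end

section
/- Let k be a field, A a finite-dimensional k-algebra, P a finitely generated projective left A-module, B := (End_A P)^op, and F := Hom_A(P, −). Assume condition (A1): for all finitely generated projective A-modules M, N, the map Hom_A(M, N) → Hom_B(F(M), F(N)) induced by F is bijective. Then the center Z(A) of A is isomorphic as a k-algebra to the center Z(B) of B; in particular, the primitive central idempotents (blocks) of A are in bijection with those of B. -/
/-!
A central element `z` of `A` acts on `P` by an `A`-endomorphism commuting with all of `End_A P`,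
which gives `Z(A) → Z(B)`. For central `z`, `F` sends right multiplication `ρ_z` on `A` to
precomposition with this action on `F(A) = Hom_A(P, A)`, so faithfulness of `F` on `End_A A`
gives injectivity. Conversely, a central `c ∈ Z(B)` acts `B`-linearly on `F(A)` by
precomposition, so by fullness this action is `F(φ) = F(ρ_z)` with `z = φ 1`. As `F(ρ_z)` then
commutes with every `F(ρ_a)`, faithfulness makes `z` central, and `f ∘ c = f ∘ z` for all
`f : P → A` gives `c = z` because the dual of a projective module separates points.
Block idempotents only depend on the commutative ring `Z(-)`, so they are carried along.
-/

noncomputable section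

/-- a primitive central idempotent (block idempotent) -/
def IsBlockIdempotent (R : Type) [Ring R] (e : R) : Prop :=
  e ≠ 0 ∧ IsIdempotentElem e ∧ e ∈ Subring.center R ∧
    ∀ f g : R, IsIdempotentElem f → IsIdempotentElem g →
      f ∈ Subring.center R → g ∈ Subring.center R →
      f * g = 0 → e = f + g → f = 0 ∨ g = 0

section Cover

variable (A : Type) [Ring A] (P : Type) [AddCommGroup P] [Module A P]

/-- the module structure on `F(M) = Hom_A(P, M)` over `B = (End_A P)ᵒᵖ`, by precomposition -/
instance endOppModule (M : Type) [AddCommGroup M] [Module A M] :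
    Module (Module.End A P)ᵐᵒᵖ (P →ₗ[A] M) where
  smul b f := f ∘ₗ b.unop
  one_smul f := LinearMap.comp_id f
  mul_smul _ _ _ := rfl
  smul_zero _ := LinearMap.zero_comp _
  smul_add _ _ _ := LinearMap.add_comp _ _ _
  add_smul _ _ _ := LinearMap.comp_add _ _ _
  zero_smul f := LinearMap.comp_zero f

/-- The `B`-module homomorphism `F(M) → F(N)` induced by an `A`-module homomorphism
`φ : M → N`, namely postcomposition with `φ`. -/
def inducedHom {M N : Type} [AddCommGroup M] [Module A M] [AddCommGroup N] [Module A N]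
    (φ : M →ₗ[A] N) : (P →ₗ[A] M) →ₗ[(Module.End A P)ᵐᵒᵖ] (P →ₗ[A] N) where
  toFun f := φ ∘ₗ f
  map_add' f g := LinearMap.comp_add _ _ _
  map_smul' _ _ := rfl

/-- Condition (A1): `F = Hom_A(P, -)` is fully faithful on finitely generated
projective `A`-modules. -/
def CondA1 : Prop :=
  ∀ (M : Type) [AddCommGroup M] [Module A M] [Module.Finite A M] [Module.Projective A M]
    (N : Type) [AddCommGroup N] [Module A N] [Module.Finite A N] [Module.Projective A N],
    Function.Bijective (fun φ : M →ₗ[A] N => inducedHom A P φ)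

end Cover

theorem IsBlockIdempotent.mem_center {R : Type} [Ring R] {e : R} (h : IsBlockIdempotent R e) :
    e ∈ Subring.center R :=
  h.2.2.1

theorem IsBlockIdempotent.map {R S : Type} [Ring R] [Ring S] (ψ : R ≃+* S) {e : R}
    (h : IsBlockIdempotent R e) : IsBlockIdempotent S (ψ e) := by
  obtain ⟨hne, hidem, hcen, hprim⟩ := h
  refine ⟨(map_ne_zero_iff ψ ψ.injective).2 hne, hidem.map ψ,
    (MulEquivClass.apply_mem_center_iff ψ).2 hcen, fun f g hf hg hfc hgc hfg hsum => ?_⟩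
  have := hprim (ψ.symm f) (ψ.symm g) (hf.map ψ.symm) (hg.map ψ.symm)
    ((MulEquivClass.apply_mem_center_iff ψ.symm).2 hfc)
    ((MulEquivClass.apply_mem_center_iff ψ.symm).2 hgc)
    (by rw [← map_mul, hfg, map_zero]) (by rw [← map_add, ← hsum, ψ.symm_apply_apply])
  simpa using this

theorem isBlockIdempotent_map_iff {R S : Type} [Ring R] [Ring S] (ψ : R ≃+* S) {e : R} :
    IsBlockIdempotent S (ψ e) ↔ IsBlockIdempotent R e :=
  ⟨fun h => by simpa using h.map ψ.symm, fun h => h.map ψ⟩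

theorem isBlockIdempotent_center_iff {R : Type} [Ring R] (z : Subring.center R) :
    IsBlockIdempotent (Subring.center R) z ↔ IsBlockIdempotent R z := by
  have hcen (w : Subring.center R) : w ∈ Subring.center (Subring.center R) :=
    Subring.mem_center_iff.2 fun _ => mul_comm _ _
  constructor
  · rintro ⟨hne, hid, -, hprim⟩
    refine ⟨by exact_mod_cast hne, congrArg Subtype.val hid, z.2,
      fun f g hf hg hfc hgc hfg hsum => ?_⟩
    simpa only [Subtype.ext_iff, ZeroMemClass.coe_zero] using
      hprim ⟨f, hfc⟩ ⟨g, hgc⟩ (Subtype.ext hf) (Subtype.ext hg) (hcen _) (hcen _)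
        (Subtype.ext hfg) (Subtype.ext hsum)
  · rintro ⟨hne, hid, -, hprim⟩
    refine ⟨by exact_mod_cast hne, Subtype.ext hid, hcen z, fun f g hf hg _ _ hfg hsum => ?_⟩
    simpa only [ZeroMemClass.coe_eq_zero] using
      hprim f g (congrArg Subtype.val hf) (congrArg Subtype.val hg) f.2 g.2
        (congrArg Subtype.val hfg) (congrArg Subtype.val hsum)

def blockIdempotentsEquivCenter (R : Type) [Ring R] :
    {e : R // IsBlockIdempotent R e} ≃
      {z : Subring.center R // IsBlockIdempotent (Subring.center R) z} where
  toFun e := ⟨⟨e, e.2.mem_center⟩, (isBlockIdempotent_center_iff _).2 e.2⟩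
  invFun z := ⟨z.1, (isBlockIdempotent_center_iff z.1).1 z.2⟩
  left_inv _ := rfl
  right_inv _ := rfl

def blockIdempotentsEquivOfCenterEquiv {R S : Type} [Ring R] [Ring S]
    (ψ : Subring.center R ≃+* Subring.center S) :
    {e : R // IsBlockIdempotent R e} ≃ {e : S // IsBlockIdempotent S e} :=
  (blockIdempotentsEquivCenter R).trans <|
    (ψ.toEquiv.subtypeEquiv fun _ => (isBlockIdempotent_map_iff ψ).symm).trans
      (blockIdempotentsEquivCenter S).symm

def Subalgebra.centerRingEquivSubringCenter (k R : Type) [CommRing k] [Ring R] [Algebra k R] :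
    Subalgebra.center k R ≃+* Subring.center R :=
  RingEquiv.subringCongr (Subalgebra.center_toSubring k R)

theorem LinearMap.ext_of_forall_dual_comp_eq {R M N : Type} [Ring R] [AddCommGroup M] [Module R M]
    [Module.Projective R M] [AddCommGroup N] [Module R N] {g h : N →ₗ[R] M}
    (hgh : ∀ f : Module.Dual R M, f ∘ₗ g = f ∘ₗ h) : g = h := by
  ext x
  rw [← sub_eq_zero, ← Module.forall_dual_apply_eq_zero_iff R]
  intro f
  rw [map_sub, sub_eq_zero, ← LinearMap.comp_apply, hgh, LinearMap.comp_apply]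

section CenterAction

variable {A P : Type} [Ring A] [AddCommGroup P] [Module A P]

theorem inducedHom_comp {M N L : Type} [AddCommGroup M] [Module A M] [AddCommGroup N]
    [Module A N] [AddCommGroup L] [Module A L] (φ : N →ₗ[A] L) (ψ : M →ₗ[A] N) :
    inducedHom A P (φ ∘ₗ ψ) = inducedHom A P φ ∘ₗ inducedHom A P ψ :=
  rfl

theorem inducedHom_toSpanSingleton {z : A} (hz : z ∈ Set.center A) (f : P →ₗ[A] A) :
    inducedHom A P (LinearMap.toSpanSingleton A A z) f = f ∘ₗ Module.End.smulLeft z hz := by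
  ext p
  change f p * z = f (z • p)
  rw [map_smul, smul_eq_mul, Semigroup.mem_center_iff.mp hz]

theorem Module.End.smulLeft_mem_center {z : A} (hz : z ∈ Set.center A) :
    Module.End.smulLeft z hz ∈ Set.center (Module.End A P) :=
  Semigroup.mem_center_iff.2 fun f => by ext p; exact map_smul f z p

theorem mem_center_of_inducedHom_eq_smulLeft
    (hinj : Function.Injective (inducedHom A P : (A →ₗ[A] A) → _))
    {b : (Module.End A P)ᵐᵒᵖ} (hb : b ∈ Set.center (Module.End A P)ᵐᵒᵖ) {z : A}
    (hz : inducedHom A P (LinearMap.toSpanSingleton A A z) = Module.End.smulLeft b hb) :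
    z ∈ Set.center A := by
  refine Semigroup.mem_center_iff.2 fun a => ?_
  have hcomm : LinearMap.toSpanSingleton A A z ∘ₗ LinearMap.toSpanSingleton A A a =
      LinearMap.toSpanSingleton A A a ∘ₗ LinearMap.toSpanSingleton A A z := hinj <| by
    ext f : 1
    simp only [inducedHom_comp, LinearMap.comp_apply, hz, Module.End.smulLeft_apply,
      LinearMap.map_smul]
  simpa using congr($hcomm 1)

theorem exists_smulLeft_eq_of_mem_center [Module.Projective A P]
    (hinj : Function.Injective (inducedHom A P : (A →ₗ[A] A) → _))
    (hsurj : Function.Surjective (inducedHom A P : (A →ₗ[A] A) → _))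
    {c : Module.End A P} (hc : c ∈ Set.center (Module.End A P)) :
    ∃ (z : A) (hz : z ∈ Set.center A), Module.End.smulLeft z hz = c := by
  obtain ⟨φ, hφ⟩ := hsurj (Module.End.smulLeft _ (MulOpposite.op_mem_center_iff.2 hc))
  rw [LinearMap.ext_ring (LinearMap.toSpanSingleton_apply_one A A (φ 1)).symm] at hφ
  have hz := mem_center_of_inducedHom_eq_smulLeft hinj _ hφ
  refine ⟨φ 1, hz, LinearMap.ext_of_forall_dual_comp_eq fun f => ?_⟩
  rw [← inducedHom_toSpanSingleton hz, hφ]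
  rfl

end CenterAction

section CenterMap

variable (k : Type) [CommSemiring k] (A : Type) [Ring A] [Algebra k A]
  (P : Type) [AddCommGroup P] [Module A P] [Module k P] [IsScalarTower k A P]
  [SMulCommClass A k P]

def Subalgebra.centerToEnd : Subalgebra.center k A →ₐ[k] Module.End A P where
  toFun z := Module.End.smulLeft z.1 z.2
  map_one' := by ext; simp
  map_mul' _ _ := by ext; exact mul_smul _ _ _
  map_zero' := by ext; simp
  map_add' _ _ := by ext; exact add_smul _ _ _
  commutes' _ := by ext; simp [algebraMap_smul]

def Subalgebra.centerToCenterEndOp :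
    Subalgebra.center k A →ₐ[k] Subalgebra.center k (Module.End A P)ᵐᵒᵖ :=
  ((centerToEnd k A P).toOpposite fun z w => by
    rw [Commute, SemiconjBy, ← map_mul, ← map_mul, mul_comm]).codRestrict _ fun z =>
    MulOpposite.op_mem_center_iff.2 (Module.End.smulLeft_mem_center z.2)

variable {k A P}

theorem Subalgebra.centerToCenterEndOp_injective
    (hinj : Function.Injective (inducedHom A P : (A →ₗ[A] A) → _)) :
    Function.Injective (centerToCenterEndOp k A P) := by
  intro z w hzw
  have hsmul : Module.End.smulLeft z.1 z.2 = Module.End.smulLeft (M := P) w.1 w.2 :=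
    MulOpposite.op_injective (congrArg Subtype.val hzw)
  refine Subtype.ext (LinearMap.toSpanSingleton_injective A A (hinj ?_))
  ext f : 1
  rw [inducedHom_toSpanSingleton z.2, inducedHom_toSpanSingleton w.2, hsmul]

theorem Subalgebra.centerToCenterEndOp_surjective [Module.Projective A P]
    (hinj : Function.Injective (inducedHom A P : (A →ₗ[A] A) → _))
    (hsurj : Function.Surjective (inducedHom A P : (A →ₗ[A] A) → _)) :
    Function.Surjective (centerToCenterEndOp k A P) := by
  rintro ⟨b, hb⟩
  obtain ⟨z, hz, hzb⟩ := exists_smulLeft_eq_of_mem_center hinj hsurj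
    (MulOpposite.unop_mem_center_iff.2 hb)
  exact ⟨⟨z, hz⟩, Subtype.ext (congrArg MulOpposite.op hzb)⟩

end CenterMap

theorem center_iso_of_condA1_general
    (k : Type) [Field k] (A : Type) [Ring A] [Algebra k A]
    (P : Type) [AddCommGroup P] [Module A P] [Module.Projective A P]
    [Module k P] [IsScalarTower k A P] [SMulCommClass A k P]
    (hA1 : CondA1 A P) :
    Nonempty ((Subalgebra.center k A) ≃ₐ[k]
        (Subalgebra.center k ((Module.End A P)ᵐᵒᵖ))) ∧
      Nonempty ({e : A // IsBlockIdempotent A e} ≃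
        {e : (Module.End A P)ᵐᵒᵖ // IsBlockIdempotent _ e}) := by
  have Φ := AlgEquiv.ofBijective (Subalgebra.centerToCenterEndOp k A P)
    ⟨Subalgebra.centerToCenterEndOp_injective (hA1 A A).1,
      Subalgebra.centerToCenterEndOp_surjective (hA1 A A).1 (hA1 A A).2⟩
  refine ⟨⟨Φ⟩, ⟨blockIdempotentsEquivOfCenterEquiv ?_⟩⟩
  exact (Subalgebra.centerRingEquivSubringCenter k A).symm.trans
    (Φ.toRingEquiv.trans (Subalgebra.centerRingEquivSubringCenter k _))

/-- If `k` is a field, `A` a finite-dimensional `k`-algebra, `P` a finitely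
generated projective left `A`-module, `B := (End_A P)ᵒᵖ`, `F := Hom_A(P, −)`, and
condition (A1) holds, then `Z(A) ≅ Z(B)` as `k`-algebras; in particular the primitive
central idempotents (blocks) of `A` are in bijection with those of `B`. -/
theorem center_iso_of_condA1
    (k : Type) [Field k] (A : Type) [Ring A] [Algebra k A] [FiniteDimensional k A]
    (P : Type) [AddCommGroup P] [Module A P] [Module.Finite A P] [Module.Projective A P]
    [Module k P] [IsScalarTower k A P] [SMulCommClass A k P]
    (hA1 : CondA1 A P) :
    Nonempty ((Subalgebra.center k A) ≃ₐ[k]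
        (Subalgebra.center k ((Module.End A P)ᵐᵒᵖ))) ∧
      Nonempty ({e : A // IsBlockIdempotent A e} ≃
        {e : (Module.End A P)ᵐᵒᵖ // IsBlockIdempotent _ e}) :=
  center_iso_of_condA1_general k A P hA1
end
end

section
/- Let r = p·d, fix q ∈ ℂ with q ≠ 0, ξ := exp(2π√−1/p), x_0 := 1, and nonzero x_1, …, x_{d−1} ∈ ℂ, and define the parameters Q_{c·p+m} := x_c ξ^m for 0 ≤ c ≤ d−1 and 0 ≤ m ≤ p−1. Then for all λ, μ ∈ P_{n,r} and every i ∈ ℤ: λ ∼_R μ if and only if λ[i] ∼_R μ[i], where ∼_R is the residue equivalence with respect to the parameters q, Q_0, …, Q_{r−1}. -/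
noncomputable section

/-- An `r`-multipartition of `n`, encoded as a function `la : ℕ → ℕ → ℕ`, where
`la k i` is the `(i+1)`-st part of the `(k+1)`-st component `λ^{(k+1)}`: each
component is weakly decreasing, the parts vanish from index `n` on, the components
with index `≥ r` vanish, and the total size is `n`. -/
def IsMultipartition (n r : ℕ) (la : ℕ → ℕ → ℕ) : Prop :=
  (∀ k, Antitone (la k)) ∧ (∀ k i, n ≤ i → la k i = 0) ∧
    (∀ k, r ≤ k → ∀ i, la k i = 0) ∧
    (∑ k ∈ Finset.range r, ∑ i ∈ Finset.range n, la k i) = n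

/-- The index map underlying the shift `λ ↦ λ[i]`: the component with (0-based) index
`t = c·p + j` (`0 ≤ j < p`) of `λ[i]` is the component of `λ` with index
`c·p + ((j + i) mod p)`. -/
def shiftIdx (p : ℕ) (i : ℤ) (t : ℕ) : ℕ :=
  p * (t / p) + ((((t % p : ℕ) : ℤ) + i) % (p : ℤ)).toNat

/-- `shift p i la` is `λ[i]`, cyclically shifting the `p` components within each block
of `p` consecutive components by `i`. -/
def shift (p : ℕ) (i : ℤ) (la : ℕ → ℕ → ℕ) : ℕ → ℕ → ℕ :=
  fun t => la (shiftIdx p i t)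

/-- `𝔨_λ`: the minimal positive integer `m` with `λ[m] = λ`. -/
def kOf (p : ℕ) (la : ℕ → ℕ → ℕ) : ℕ :=
  sInf {m : ℕ | 0 < m ∧ shift p (m : ℤ) la = la}

open Classical in
/-- The residue of the (0-based) cell in row `i`, column `j` of the `(k+1)`-st component,
with respect to the parameters `q` and `Q_0, …, Q_{r-1}`; it takes values in
`ℂ ⊔ (ℤ × ℂ)`. -/
def res (q : ℂ) (Q : ℕ → ℂ) (r : ℕ) (i j k : ℕ) : ℂ ⊕ (ℤ × ℂ) :=
  if q ≠ 1 ∧ Q k ≠ 0 then Sum.inl (q ^ ((j : ℤ) - (i : ℤ)) * Q k)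
  else if q = 1 ∧ (∀ l < r, l ≠ k → Q l ≠ Q k) then Sum.inr ((j : ℤ) - (i : ℤ), Q k)
  else Sum.inl (Q k)

/-- The number of cells of the diagram of `λ` whose residue is `a`.  A cell is a triple
`(k, i, j)` with `k < r`, `i < n` and `j < λ^{(k+1)}_{i+1}` (all 0-based). -/
def resCount (q : ℂ) (Q : ℕ → ℂ) (r n : ℕ) (la : ℕ → ℕ → ℕ) (a : ℂ ⊕ (ℤ × ℂ)) : ℕ :=
  Nat.card {c : ℕ × ℕ × ℕ // c.1 < r ∧ c.2.1 < n ∧ c.2.2 < la c.1 c.2.1 ∧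
    res q Q r c.2.1 c.2.2 c.1 = a}

/-- The residue equivalence `λ ∼_R μ`: for every residue value the numbers of cells of
`λ` and of `μ` with that residue agree. -/
def ResEquiv (q : ℂ) (Q : ℕ → ℂ) (r n : ℕ) (la mu : ℕ → ℕ → ℕ) : Prop :=
  ∀ a : ℂ ⊕ (ℤ × ℂ), resCount q Q r n la a = resCount q Q r n mu a

end

/-!
Shifting the components of each block by `i` multiplies every parameter `Q_k` by the same
root of unity `ξ ^ i`. Since the shift permutes the components, the residue of a cell of `λ[i]`
is then the residue of the matching cell of `λ` rescaled by `ξ ^ i` (in each of the three cases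
of `res`), and rescaling is a bijection of residue values. Hence the residue counts of `λ[i]`
are those of `λ` read through a fixed bijection, and `∼_R` is preserved.
-/

theorem shiftIdx_div {p : ℕ} (hp : 0 < p) (i : ℤ) (t : ℕ) : shiftIdx p i t / p = t / p := by
  have hlt : ((((t % p : ℕ) : ℤ) + i) % p).toNat < p := by
    have := Int.emod_lt_of_pos (((t % p : ℕ) : ℤ) + i) (Int.natCast_pos.2 hp)
    omega
  rw [shiftIdx, Nat.mul_add_div hp, Nat.div_eq_of_lt hlt, add_zero]

theorem shiftIdx_emod {p : ℕ} (hp : 0 < p) (i : ℤ) (t : ℕ) :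
    (shiftIdx p i t : ℤ) % p = (t + i) % p := by
  have hp' : (p : ℤ) ≠ 0 := by exact_mod_cast hp.ne'
  rw [shiftIdx, Nat.cast_add, Int.toNat_of_nonneg (Int.emod_nonneg _ hp'), Nat.cast_mul,
    Int.mul_add_emod_self_left, Int.emod_emod_of_dvd _ dvd_rfl, Int.natCast_mod,
    Int.emod_add_emod]

theorem shiftIdx_shiftIdx {p : ℕ} (hp : 0 < p) (i j : ℤ) (t : ℕ) :
    shiftIdx p j (shiftIdx p i t) = shiftIdx p (i + j) t := by
  rw [← Nat.div_add_mod (shiftIdx p j _) p, ← Nat.div_add_mod (shiftIdx p (i + j) t) p,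
    shiftIdx_div hp, shiftIdx_div hp, shiftIdx_div hp]
  congr 1
  zify
  rw [shiftIdx_emod hp, shiftIdx_emod hp, ← Int.emod_add_emod, shiftIdx_emod hp,
    Int.emod_add_emod, add_assoc]

theorem shiftIdx_zero {p : ℕ} (hp : 0 < p) (t : ℕ) : shiftIdx p 0 t = t := by
  rw [← Nat.div_add_mod (shiftIdx p 0 t) p, shiftIdx_div hp]
  conv_rhs => rw [← Nat.div_add_mod t p]
  congr 1
  zify
  rw [shiftIdx_emod hp, add_zero]

-- `shift p i la` is definitionally `la ∘ shiftPerm hp i`.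
def shiftPerm {p : ℕ} (hp : 0 < p) (i : ℤ) : Equiv.Perm ℕ where
  toFun := shiftIdx p i
  invFun := shiftIdx p (-i)
  left_inv t := by rw [shiftIdx_shiftIdx hp, add_neg_cancel, shiftIdx_zero hp]
  right_inv t := by rw [shiftIdx_shiftIdx hp, neg_add_cancel, shiftIdx_zero hp]

theorem shiftIdx_lt_mul_iff {p : ℕ} (hp : 0 < p) (i : ℤ) (t d : ℕ) :
    shiftIdx p i t < p * d ↔ t < p * d := by
  rw [mul_comm, ← Nat.div_lt_iff_lt_mul hp, ← Nat.div_lt_iff_lt_mul hp, shiftIdx_div hp]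

section BlockParameters

variable {p d : ℕ} {ξ : ℂˣ} {x Q : ℕ → ℂ}

theorem apply_eq_mul_pow_mod (hp : 0 < p) (hQ : ∀ c < d, ∀ m < p, Q (c * p + m) = x c * ξ ^ m)
    {t : ℕ} (ht : t < p * d) : Q t = x (t / p) * ξ ^ (t % p) := by
  have := hQ (t / p) ((Nat.div_lt_iff_lt_mul hp).2 (mul_comm p d ▸ ht)) (t % p) (Nat.mod_lt t hp)
  rwa [mul_comm, Nat.div_add_mod] at this

theorem apply_shiftIdx_eq_zpow_mul (hp : 0 < p) (hξ : ξ ^ p = 1)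
    (hQ : ∀ c < d, ∀ m < p, Q (c * p + m) = x c * ξ ^ m) (i : ℤ) {t : ℕ} (ht : t < p * d) :
    Q (shiftIdx p i t) = ↑(ξ ^ i) * Q t := by
  have hpow : ξ ^ (shiftIdx p i t % p) = ξ ^ i * ξ ^ (t % p) := by
    rw [← zpow_natCast, ← zpow_natCast, ← zpow_add, zpow_eq_zpow_emod' _ hξ,
      zpow_eq_zpow_emod' (_ + _) hξ]
    push_cast
    rw [Int.emod_emod_of_dvd _ dvd_rfl, shiftIdx_emod hp, add_comm i, Int.emod_add_emod]
  rw [apply_eq_mul_pow_mod hp hQ ((shiftIdx_lt_mul_iff hp i t d).2 ht),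
    apply_eq_mul_pow_mod hp hQ ht, shiftIdx_div hp, ← Units.val_pow_eq_pow_val,
    ← Units.val_pow_eq_pow_val, hpow, Units.val_mul]
  ring

end BlockParameters

def resScale (c : ℂˣ) : ℂ ⊕ (ℤ × ℂ) ≃ ℂ ⊕ (ℤ × ℂ) :=
  (MulAction.toPerm c).sumCongr ((Equiv.refl ℤ).prodCongr (MulAction.toPerm c))

section PermRescaling

variable {q : ℂ} {Q : ℕ → ℂ} {r : ℕ} (σ : Equiv.Perm ℕ) (c : ℂˣ)

theorem res_perm_eq_resScale (hσ : ∀ k, σ k < r ↔ k < r) (hQ : ∀ k < r, Q (σ k) = c * Q k)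
    (i j : ℕ) {k : ℕ} (hk : k < r) : res q Q r i j (σ k) = resScale c (res q Q r i j k) := by
  have hdistinct : (∀ l < r, l ≠ σ k → Q l ≠ c * Q k) ↔ ∀ l < r, l ≠ k → Q l ≠ Q k := by
    rw [← σ.forall_congr_right]
    refine forall_congr' fun l => ?_
    rw [hσ, σ.injective.ne_iff]
    exact imp_congr_right fun hl => by simp only [hQ l hl, ne_eq, Units.mul_right_inj]
  simp only [res, hQ k hk, hdistinct, ne_eq, Units.mul_right_eq_zero]
  split_ifs <;> simp [resScale, Units.smul_def, mul_left_comm]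

theorem resCount_comp_perm (hσ : ∀ k, σ k < r ↔ k < r) (hQ : ∀ k < r, Q (σ k) = c * Q k)
    (n : ℕ) (la : ℕ → ℕ → ℕ) (a : ℂ ⊕ (ℤ × ℂ)) :
    resCount q Q r n (la ∘ σ) a = resCount q Q r n la (resScale c a) := by
  refine Nat.card_congr (Equiv.subtypeEquiv (σ.prodCongr (Equiv.refl _)) ?_)
  rintro ⟨k, i, j⟩
  simp only [Equiv.prodCongr_apply, Equiv.coe_refl, Prod.map, id_eq, Function.comp_apply, hσ]
  refine and_congr_right fun hk => ?_
  rw [res_perm_eq_resScale σ c hσ hQ i j hk, (resScale c).apply_eq_iff_eq]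

theorem resEquiv_comp_perm_iff (hσ : ∀ k, σ k < r ↔ k < r) (hQ : ∀ k < r, Q (σ k) = c * Q k)
    (n : ℕ) (la mu : ℕ → ℕ → ℕ) :
    ResEquiv q Q r n (la ∘ σ) (mu ∘ σ) ↔ ResEquiv q Q r n la mu := by
  simp only [ResEquiv, resCount_comp_perm σ c hσ hQ]
  exact (resScale c).forall_congr_right
    (q := fun a => resCount q Q r n la a = resCount q Q r n mu a)

end PermRescaling

theorem resEquiv_iff_shift_resEquiv_general
    (n r p d : ℕ) (hp : 0 < p) (hr : r = p * d)
    (q : ℂ)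
    (x : ℕ → ℂ)
    (Q : ℕ → ℂ)
    (hQ : ∀ c < d, ∀ m < p,
      Q (c * p + m) = x c * Complex.exp (2 * Real.pi * Complex.I / p) ^ m)
    (la mu : ℕ → ℕ → ℕ) (i : ℤ) :
    ResEquiv q Q r n la mu ↔ ResEquiv q Q r n (shift p i la) (shift p i mu) := by
  have hξ := (Complex.isPrimitiveRoot_exp p hp.ne').isUnit_unit hp.ne'
  subst hr
  exact (resEquiv_comp_perm_iff (shiftPerm hp i) (_ ^ i) (shiftIdx_lt_mul_iff hp i · d)
    (fun k hk => apply_shiftIdx_eq_zpow_mul hp hξ.pow_eq_one hQ i hk) n la mu).symm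

/-- with the parameters `q ≠ 0` and `Q_{c·p+m} = x_c ξ^m`
(`ξ = exp(2π√-1/p)`, `x_0 = 1`, `x_1, …, x_{d-1} ≠ 0`), the residue equivalence is
stable under simultaneous shifts: `λ ∼_R μ` iff `λ[i] ∼_R μ[i]` for every `i ∈ ℤ`. -/
theorem resEquiv_iff_shift_resEquiv
    (n r p d : ℕ) (hp : 0 < p) (hd : 0 < d) (hr : r = p * d)
    (q : ℂ) (hq : q ≠ 0)
    (x : ℕ → ℂ) (hx0 : x 0 = 1) (hx : ∀ c, 0 < c → c < d → x c ≠ 0)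
    (Q : ℕ → ℂ)
    (hQ : ∀ c < d, ∀ m < p,
      Q (c * p + m) = x c * Complex.exp (2 * Real.pi * Complex.I / p) ^ m)
    (la mu : ℕ → ℕ → ℕ)
    (hla : IsMultipartition n r la) (hmu : IsMultipartition n r mu) (i : ℤ) :
    ResEquiv q Q r n la mu ↔ ResEquiv q Q r n (shift p i la) (shift p i mu) :=
  resEquiv_iff_shift_resEquiv_general n r p d hp hr q x Q hQ la mu i
end
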